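/- Let 2 < p < ∞. There exists a measurable function g : ℝ² → [0,∞) such that ∫_ℝ ( ∫_ℝ g(s,t)² dt )^{p/2} ds < ∞ (so g defines an element of L^p(ℝ; L²(ℝ))), while ∫_ℝ g(s,t)^p ds = ∞ for every t ≥ 0. Consequently, not every element of L^p(ℝ; L²(ℝ)) is representable by a measurable function from ℝ into L^p(ℝ). -/

import Mathlib

/-!
With `(p - 2) q = 2`, let `g = 2^{qn}` on the strip `n ≤ s < n + 1`, restricted to the band of
half-width `2^{(1-pq)n}` around the steep segment `t = 2^n (s - n)`. Every vertical slice of that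
strip has `∫ g² dt = 2^{1-n}`, so `∫ (∫ g² dt)^{p/2} ds` is a convergent geometric series. But a
horizontal line at height `t ≥ 0` crosses the band of every strip with `2^n ≥ t` along an
`s`-interval of length at least `2^{(1-pq)n} / 2^n`, on which `g^p = 2^{pqn}`; so each of these
infinitely many strips contributes at least `1` to `∫ g^p ds`.
-/

open MeasureTheory Set Filter Function
open scoped ENNReal

lemma iUnion_Ico_natCast_eq_Ici :
    ⋃ n : ℕ, Ico (n : ℝ) (n + 1) = Ici 0 := by
  ext s
  simp only [mem_iUnion, mem_Ico, mem_Ici]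
  refine ⟨fun ⟨n, hn, _⟩ => (Nat.cast_nonneg n).trans hn, fun hs => ?_⟩
  exact ⟨⌊s⌋₊, Nat.floor_le hs, Nat.lt_floor_add_one s⟩

lemma pairwise_disjoint_Ico_natCast :
    Pairwise (Disjoint on fun n : ℕ => Ico (n : ℝ) (n + 1)) := by
  intro m n hmn
  simpa using pairwise_disjoint_Ico_intCast ℝ (Nat.cast_injective.ne hmn : (m : ℤ) ≠ n)

lemma lintegral_eq_tsum_setLIntegral_Ico_natCast {f : ℝ → ℝ≥0∞} (hf : ∀ s < 0, f s = 0) :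
    ∫⁻ s, f s = ∑' n : ℕ, ∫⁻ s in Ico (n : ℝ) (n + 1), f s := by
  rw [← lintegral_iUnion (fun _ => measurableSet_Ico) pairwise_disjoint_Ico_natCast,
    iUnion_Ico_natCast_eq_Ici, setLIntegral_eq_of_support_subset]
  intro s hs
  by_contra h
  exact hs (hf s (not_le.mp h))

lemma ENNReal.tsum_eq_top_of_eventually_one_le {a : ℕ → ℝ≥0∞} (ha : ∀ᶠ n in atTop, 1 ≤ a n) :
    ∑' n, a n = ⊤ := by
  obtain ⟨N, hN⟩ := eventually_atTop.mp ha
  refine eq_top_iff.mpr ?_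
  calc ⊤ = ∑' _ : ℕ, (1 : ℝ≥0∞) := (ENNReal.tsum_const_eq_top_of_ne_zero one_ne_zero).symm
    _ ≤ ∑' n, a (n + N) := ENNReal.tsum_le_tsum fun n => hN _ (Nat.le_add_left N n)
    _ ≤ ∑' n, a n := ENNReal.tsum_comp_le_tsum_of_injective (add_left_injective N) a

noncomputable def tiltedBands (k w H : ℕ → ℝ) (x : ℝ × ℝ) : ℝ :=
  if 0 ≤ x.1 ∧ |x.2 - k ⌊x.1⌋₊ * (x.1 - ⌊x.1⌋₊)| ≤ w ⌊x.1⌋₊ then H ⌊x.1⌋₊ else 0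

namespace tiltedBands

variable {k w H : ℕ → ℝ}

lemma measurable (k w H : ℕ → ℝ) : Measurable (tiltedBands k w H) := by
  have hn : Measurable fun x : ℝ × ℝ => ⌊x.1⌋₊ := Nat.measurable_floor.comp measurable_fst
  have hband : MeasurableSet
      {x : ℝ × ℝ | 0 ≤ x.1 ∧ |x.2 - k ⌊x.1⌋₊ * (x.1 - ⌊x.1⌋₊)| ≤ w ⌊x.1⌋₊} :=
    (measurableSet_le measurable_const measurable_fst).inter <| measurableSet_le
      (measurable_snd.sub ((measurable_from_nat.comp hn).mul
        (measurable_fst.sub (measurable_from_nat.comp hn)))).abs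
      (measurable_from_nat.comp hn)
  exact Measurable.ite hband (measurable_from_nat.comp hn) measurable_const

lemma nonneg (hH : ∀ n, 0 ≤ H n) (x : ℝ × ℝ) : 0 ≤ tiltedBands k w H x := by
  unfold tiltedBands
  split_ifs
  exacts [hH _, le_rfl]

lemma of_neg {s : ℝ} (hs : s < 0) (t : ℝ) : tiltedBands k w H (s, t) = 0 :=
  if_neg fun h => hs.not_ge h.1

lemma of_mem_Ico {n : ℕ} {s : ℝ} (hs : s ∈ Ico (n : ℝ) (n + 1)) (t : ℝ) :
    tiltedBands k w H (s, t) = if |t - k n * (s - n)| ≤ w n then H n else 0 := by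
  have hs0 : 0 ≤ s := (Nat.cast_nonneg n).trans hs.1
  simp only [tiltedBands, Nat.floor_eq_on_Ico n s hs, hs0, true_and]

lemma lintegral_comp_of_mem_Ico {φ : ℝ → ℝ≥0∞} (hφ : φ 0 = 0) {n : ℕ} {s : ℝ}
    (hs : s ∈ Ico (n : ℝ) (n + 1)) :
    ∫⁻ t, φ (tiltedBands k w H (s, t)) = φ (H n) * ENNReal.ofReal (2 * w n) := by
  have hslice : (fun t => φ (tiltedBands k w H (s, t))) =
      (Icc (k n * (s - n) - w n) (k n * (s - n) + w n)).indicator fun _ => φ (H n) := by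
    ext t
    simp only [of_mem_Ico hs, indicator_apply, ← mem_Icc_iff_abs_le, abs_sub_comm t, apply_ite φ,
      hφ]
  rw [hslice, lintegral_indicator_const measurableSet_Icc, Real.volume_Icc]
  ring_nf

lemma lintegral_rpow_lintegral_comp {φ : ℝ → ℝ≥0∞} (hφ : φ 0 = 0) {r : ℝ} (hr : 0 < r) :
    ∫⁻ s, (∫⁻ t, φ (tiltedBands k w H (s, t))) ^ r =
      ∑' n : ℕ, (φ (H n) * ENNReal.ofReal (2 * w n)) ^ r := by
  rw [lintegral_eq_tsum_setLIntegral_Ico_natCast fun s hs => by simp [of_neg hs, hφ, hr]]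
  refine tsum_congr fun n => ?_
  rw [setLIntegral_congr_fun measurableSet_Ico fun s hs => by rw [lintegral_comp_of_mem_Ico hφ hs],
    setLIntegral_const, Real.volume_Ico, add_sub_cancel_left, ENNReal.ofReal_one, mul_one]

lemma le_setLIntegral_Ico_comp (φ : ℝ → ℝ≥0∞) {n : ℕ} {t : ℝ} (hk : 0 < k n) (ht₀ : 0 ≤ t)
    (ht : t ≤ k n) (hw₀ : 0 ≤ w n) (hw : w n ≤ k n) :
    φ (H n) * ENNReal.ofReal (w n / k n) ≤
      ∫⁻ s in Ico (n : ℝ) (n + 1), φ (tiltedBands k w H (s, t)) := by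
  -- The line at height `t` meets the band where `k n * (s - n) ∈ [t - w n, t + w n]`; the part
  -- `[a, a + w n)` of that range keeps `s` inside the strip.
  set a := max (t - w n) 0
  have ha : t - w n ≤ a ∧ 0 ≤ a ∧ a ≤ t ∧ a + w n ≤ k n :=
    ⟨le_max_left _ _, le_max_right _ _, max_le (by linarith) ht₀,
      le_sub_iff_add_le.mp (max_le (by linarith) (by linarith))⟩
  have hband : ∀ s ∈ Ico (n + a / k n) (n + (a + w n) / k n),
      s ∈ Ico (n : ℝ) (n + 1) ∧ tiltedBands k w H (s, t) = H n := by
    intro s hs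
    have h₁ : a ≤ k n * (s - n) := by rw [← div_le_iff₀' hk]; linarith [hs.1]
    have h₂ : k n * (s - n) < a + w n := by rw [← lt_div_iff₀' hk]; linarith [hs.2]
    have hsn : s ∈ Ico (n : ℝ) (n + 1) := by
      constructor <;> nlinarith
    refine ⟨hsn, ?_⟩
    rw [of_mem_Ico hsn, if_pos (abs_le.mpr ⟨by linarith, by linarith⟩)]
  calc φ (H n) * ENNReal.ofReal (w n / k n)
      = ∫⁻ _ in Ico (n + a / k n) (n + (a + w n) / k n), φ (H n) := by
        rw [setLIntegral_const, Real.volume_Ico]; ring_nf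
    _ = ∫⁻ s in Ico (n + a / k n) (n + (a + w n) / k n), φ (tiltedBands k w H (s, t)) :=
        setLIntegral_congr_fun measurableSet_Ico fun s hs => by rw [(hband s hs).2]
    _ ≤ ∫⁻ s in Ico (n : ℝ) (n + 1), φ (tiltedBands k w H (s, t)) :=
        lintegral_mono_set fun s hs => (hband s hs).1

lemma lintegral_comp_eq_top {φ : ℝ → ℝ≥0∞} (hφ : φ 0 = 0) {t : ℝ} (ht : 0 ≤ t)
    (hk : ∀ n, 0 < k n) (hk_top : Tendsto k atTop atTop) (hw₀ : ∀ n, 0 ≤ w n)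
    (hw : ∀ n, w n ≤ k n) (hmass : ∀ n, 1 ≤ φ (H n) * ENNReal.ofReal (w n / k n)) :
    ∫⁻ s, φ (tiltedBands k w H (s, t)) = ⊤ := by
  rw [lintegral_eq_tsum_setLIntegral_Ico_natCast fun s hs => by rw [of_neg hs, hφ]]
  refine ENNReal.tsum_eq_top_of_eventually_one_le ?_
  filter_upwards [tendsto_atTop.mp hk_top t] with n htn
  exact (hmass n).trans (le_setLIntegral_Ico_comp φ (hk n) ht htn (hw₀ n) (hw n))

end tiltedBands

noncomputable def powerBands (p q : ℝ) : ℝ × ℝ → ℝ :=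
  tiltedBands (2 ^ ·) (fun n => 2 ^ ((1 - p * q) * n)) (fun n => 2 ^ (q * n))

namespace powerBands

variable {p q : ℝ}

lemma lintegral_rpow_lintegral_sq_lt_top (hp : 0 < p) (hpq : q * (p - 2) = 2) :
    ∫⁻ s, (∫⁻ t, ENNReal.ofReal (powerBands p q (s, t)) ^ 2) ^ (p / 2) < ⊤ := by
  have hslice : ∀ n : ℕ, (ENNReal.ofReal (2 ^ (q * n)) ^ 2 *
      ENNReal.ofReal (2 * 2 ^ ((1 - p * q) * n))) ^ (p / 2) =
        ENNReal.ofReal (2 ^ (p / 2) * (2 ^ (-(p / 2))) ^ n) := by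
    intro n
    rw [← ENNReal.ofReal_pow (by positivity), ← ENNReal.ofReal_mul (by positivity),
      ENNReal.ofReal_rpow_of_nonneg (by positivity) (by positivity)]
    congr 1
    rw [mul_comm 2 (_ ^ _), ← Real.rpow_add_one two_ne_zero, ← Real.rpow_natCast _ 2,
      ← Real.rpow_mul two_pos.le, ← Real.rpow_add two_pos, ← Real.rpow_mul two_pos.le,
      ← Real.rpow_natCast _ n, ← Real.rpow_mul two_pos.le, ← Real.rpow_add two_pos]
    congr 1
    push_cast
    linear_combination (-(n : ℝ) * p / 2) * hpq
  have hratio : (2 : ℝ) ^ (-(p / 2)) < 1 :=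
    Real.rpow_lt_one_of_one_lt_of_neg one_lt_two (by linarith)
  rw [powerBands, tiltedBands.lintegral_rpow_lintegral_comp (φ := (ENNReal.ofReal · ^ 2)) (by simp)
    (by positivity)]
  simp only [hslice]
  rw [← ENNReal.ofReal_tsum_of_nonneg (fun n => by positivity)
    ((summable_geometric_of_lt_one (by positivity) hratio).mul_left _)]
  exact ENNReal.ofReal_lt_top

lemma lintegral_rpow_eq_top (hp : 0 < p) (hpq : 0 ≤ p * q) {t : ℝ} (ht : 0 ≤ t) :
    ∫⁻ s, ENNReal.ofReal (powerBands p q (s, t)) ^ p = ⊤ := by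
  refine tiltedBands.lintegral_comp_eq_top (φ := (ENNReal.ofReal · ^ p)) (by simpa using hp) ht
    (fun n => by positivity) (tendsto_pow_atTop_atTop_of_one_lt one_lt_two)
    (fun n => by positivity) (fun n => ?_) (fun n => ?_)
  · rw [← Real.rpow_natCast]
    exact Real.rpow_le_rpow_of_exponent_le one_le_two (by nlinarith [n.cast_nonneg (α := ℝ)])
  · rw [ENNReal.ofReal_rpow_of_nonneg (by positivity) hp.le, ← ENNReal.ofReal_mul (by positivity),
      ← Real.rpow_mul two_pos.le, ← Real.rpow_natCast, ← Real.rpow_sub two_pos,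
      ← Real.rpow_add two_pos, show q * n * p + ((1 - p * q) * n - n) = 0 by ring, Real.rpow_zero,
      ENNReal.ofReal_one]

end powerBands

/-- For 2 < p < ∞ there is a nonnegative measurable g on ℝ² with finite
L^p_s(L²_t) norm but with ∫ g(s,t)^p ds = ∞ for every t ≥ 0; hence not every
element of L^p(ℝ; L²(ℝ)) is representable by a measurable L^p-valued function. -/
theorem exists_nonrepresentable_Lp_L2 (p : ℝ) (hp : 2 < p) :
    ∃ g : ℝ × ℝ → ℝ, Measurable g ∧ (∀ x, 0 ≤ g x) ∧
      (∫⁻ s : ℝ, (∫⁻ t : ℝ, (ENNReal.ofReal (g (s, t))) ^ 2) ^ (p / 2)) < ⊤ ∧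
      (∀ t : ℝ, 0 ≤ t → (∫⁻ s : ℝ, (ENNReal.ofReal (g (s, t))) ^ p) = ⊤) := by
  obtain ⟨q, hq, hpq⟩ : ∃ q : ℝ, 0 < q ∧ q * (p - 2) = 2 :=
    ⟨2 / (p - 2), div_pos two_pos (by linarith), div_mul_cancel₀ _ (by linarith)⟩
  have hp₀ : 0 < p := by linarith
  exact ⟨powerBands p q, tiltedBands.measurable _ _ _, tiltedBands.nonneg fun n => by positivity,
    powerBands.lintegral_rpow_lintegral_sq_lt_top hp₀ hpq,
    fun t ht => powerBands.lintegral_rpow_eq_top hp₀ (by positivity) ht⟩
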